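/- arXiv:2208.02428 — 7 statements merged into one kernel-verified Lean document; each statement's English description precedes it below -/
import Mathlib

section
/- Let G = (V, E) be a directed graph and let I ⊆ V. Then I = ⋂_{x ∈ I} [x]_⊥ if and only if I is a maximally independent set of vertices. -/
/-- Reachability: there is a nonempty directed path from `u` to `v`. -/
def Reach {V : Type*} (E : V → V → Prop) : V → V → Prop := Relation.TransGen E

/-- Two vertices are independent if neither reaches the other. -/
def Indep {V : Type*} (E : V → V → Prop) (u v : V) : Prop :=
  ¬ Reach E u v ∧ ¬ Reach E v u

/-- `[v]_⊥ = {u : u ⊥ v} ∪ {v}`. -/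
def PerpClass {V : Type*} (E : V → V → Prop) (v : V) : Set V :=
  {u | Indep E u v} ∪ {v}

/-- A set of vertices is independent if its elements are pairwise independent. -/
def IndepSet {V : Type*} (E : V → V → Prop) (I : Set V) : Prop :=
  ∀ u ∈ I, ∀ v ∈ I, u ≠ v → Indep E u v

lemma indep_symm {V : Type*} (E : V → V → Prop) {u v : V} (h : Indep E u v) :
    Indep E v u := ⟨h.2, h.1⟩

/-- `I = ⋂_{x ∈ I} [x]_⊥` iff `I` is a maximally independent set. -/
theorem stmt_1 {V : Type*} (E : V → V → Prop) (I : Set V) :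
    I = ⋂ x ∈ I, PerpClass E x ↔
      (IndepSet E I ∧ ∀ H : Set V, IndepSet E H → I ⊆ H → H = I) := by
  constructor
  · intro hI
    constructor
    · intro u hu v hv huv
      have : u ∈ ⋂ x ∈ I, PerpClass E x := hI ▸ hu
      have hm := Set.mem_iInter₂.1 this v hv
      rcases hm with h | h
      · exact h
      · exact absurd h huv
    · intro H hH hIH
      apply Set.Subset.antisymm _ hIH
      intro h hh
      rw [hI]
      apply Set.mem_iInter₂.2
      intro x hx
      by_cases hex : h = x
      · exact Or.inr hex
      · exact Or.inl (hH h hh x (hIH hx) hex)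
  · rintro ⟨hind, hmax⟩
    apply Set.Subset.antisymm
    · intro u hu
      apply Set.mem_iInter₂.2
      intro x hx
      by_cases hux : u = x
      · exact Or.inr hux
      · exact Or.inl (hind u hu x hx hux)
    · intro u hu
      have hmem := Set.mem_iInter₂.1 hu
      have hH : IndepSet E (insert u I) := by
        intro a ha b hb hab
        rcases ha with rfl | ha
        · rcases hb with rfl | hb
          · exact absurd rfl hab
          · rcases hmem b hb with h | h
            · exact h
            · exact absurd h hab
        · rcases hb with rfl | hb
          · rcases hmem a ha with h | h
            · exact indep_symm E h
            · exact absurd h.symm hab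
          · exact hind a ha b hb hab
      have := hmax (insert u I) hH (Set.subset_insert u I)
      rw [← this]
      exact Set.mem_insert u I
end

section
/- Let G = (V, E) be a finite directed acyclic graph with vertex set V = {v₁, …, vₙ}. Then G is completely serial if and only if the cardinality of [v]_⊥ equals 1 for every vertex v ∈ V. -/
/-- A finite DAG is completely serial if there is an enumeration `x₁, …, xₙ` of all
vertices with an edge from each `x_k` to `x_{k+1}` (a Hamiltonian directed path). -/
def CompletelySerial {V : Type*} [Fintype V] (E : V → V → Prop) : Prop :=
  ∃ e : Fin (Fintype.card V) ≃ V, ∀ k : ℕ, ∀ h : k + 1 < Fintype.card V,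
    E (e ⟨k, Nat.lt_of_succ_lt h⟩) (e ⟨k + 1, h⟩)

section

variable {V : Type*} {E : V → V → Prop}

theorem perpClass_eq_singleton_iff (v : V) :
    PerpClass E v = {v} ↔ ∀ u, u ≠ v → Reach E u v ∨ Reach E v u := by
  simp only [PerpClass, Set.union_eq_right, Set.subset_singleton_iff, Set.mem_ofPred_eq, Indep]
  grind

theorem ncard_perpClass_eq_one_iff (v : V) :
    (PerpClass E v).ncard = 1 ↔ ∀ u, u ≠ v → Reach E u v ∨ Reach E v u := by
  rw [← perpClass_eq_singleton_iff, Set.ncard_eq_one]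
  refine ⟨fun ⟨a, ha⟩ => ?_, fun h => ⟨v, h⟩⟩
  have hv : v ∈ PerpClass E v := Or.inr rfl
  rw [ha] at hv ⊢
  rw [hv]

theorem reach_of_lt_of_edge_succ {n : ℕ} {e : Fin n → V}
    (he : ∀ k (h : k + 1 < n), E (e ⟨k, Nat.lt_of_succ_lt h⟩) (e ⟨k + 1, h⟩)) {i j : Fin n}
    (hij : i < j) : Reach E (e i) (e j) := by
  obtain ⟨j, hj⟩ := j
  induction j with
  | zero => exact absurd (Fin.lt_def.mp hij) (Nat.not_lt_zero _)
  | succ m ih =>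
    have hedge := he m hj
    rcases Nat.lt_succ_iff_lt_or_eq.mp hij with h | h
    · exact (ih (Nat.lt_of_succ_lt hj) h).tail hedge
    · obtain rfl : i = ⟨m, Nat.lt_of_succ_lt hj⟩ := Fin.ext h
      exact .single hedge

theorem CompletelySerial.reach_or_reach [Fintype V] (h : CompletelySerial E) {u v : V}
    (huv : u ≠ v) : Reach E u v ∨ Reach E v u := by
  obtain ⟨e, he⟩ := h
  rcases lt_or_gt_of_ne (e.symm.injective.ne huv) with h | h
  · simpa using Or.inl (reach_of_lt_of_edge_succ he h)
  · simpa using Or.inr (reach_of_lt_of_edge_succ he h)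

theorem Reach.edge_of_forall_not_between {x y : V} (h : Reach E x y)
    (hbtw : ∀ c, Reach E x c → ¬ Reach E c y) : E x y := by
  obtain ⟨c, hxc, hcy⟩ := Relation.TransGen.head'_iff.mp h
  rcases Relation.reflTransGen_iff_eq_or_transGen.mp hcy with rfl | hcy
  · exact hxc
  · exact absurd hcy (hbtw c (.single hxc))

theorem completelySerial_of_reach_or_reach [Fintype V] (hdag : ∀ v : V, ¬ Reach E v v)
    (htot : ∀ u v : V, u ≠ v → Reach E u v ∨ Reach E v u) : CompletelySerial E := by
  classical
  have : IsStrictTotalOrder V (Reach E) :=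
    { trans := fun _ _ _ => Relation.TransGen.trans
      irrefl := hdag
      trichotomous := fun a b => by have := htot a b; tauto }
  let : LinearOrder V := linearOrderOfSTO (Reach E)
  let e := monoEquivOfFin V rfl
  refine ⟨e.toEquiv, fun k hk => ?_⟩
  have hcov : e ⟨k, Nat.lt_of_succ_lt hk⟩ ⋖ e ⟨k + 1, hk⟩ :=
    (apply_covBy_apply_iff e).mpr ⟨by simp [Fin.lt_def], fun c h1 h2 => by
      simp only [Fin.lt_def] at h1 h2; omega⟩
  exact hcov.lt.edge_of_forall_not_between fun c => @hcov.2 c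

end

/-- a finite DAG is completely serial iff `|[v]_⊥| = 1` for every vertex. -/
theorem stmt_2 {V : Type*} [Fintype V] (E : V → V → Prop)
    (hdag : ∀ v : V, ¬ Reach E v v) :
    CompletelySerial E ↔ ∀ v : V, (PerpClass E v).ncard = 1 := by
  simp only [ncard_perpClass_eq_one_iff]
  exact ⟨fun h v u huv => h.reach_or_reach huv,
    fun h => completelySerial_of_reach_or_reach hdag fun u v huv => h v u huv⟩
end

section
/- Let G = (V, E) be a directed graph and R an equivalence relation on V. If û and v̂ are two distinct vertices of the quotient graph G/R that are independent in G/R, then every representative u ∈ û and every representative v ∈ v̂ are independent in G, i.e. u ⊥ v. -/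
/-- The edge relation of the quotient graph `G/R`: there is an edge from class `a`
to class `b` exactly when `a ≠ b` and some `u ∈ a`, `v ∈ b` satisfy `(u, v) ∈ E`. -/
def QEdge {V : Type*} (E : V → V → Prop) (s : Setoid V) :
    Quotient s → Quotient s → Prop :=
  fun a b => a ≠ b ∧ ∃ u v : V, Quotient.mk s u = a ∧ Quotient.mk s v = b ∧ E u v

lemma reach_quot {V : Type*} (E : V → V → Prop) (s : Setoid V) {u v : V}
    (h : Reach E u v) :
    Quotient.mk s u = Quotient.mk s v ∨
      Reach (QEdge E s) (Quotient.mk s u) (Quotient.mk s v) := by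
  induction h with
  | @single w hxv =>
    by_cases he : Quotient.mk s u = Quotient.mk s w
    · exact Or.inl he
    · exact Or.inr (Relation.TransGen.single ⟨he, u, w, rfl, rfl, hxv⟩)
  | @tail b c _ hbc ih =>
    by_cases he : Quotient.mk s b = Quotient.mk s c
    · rw [← he]; exact ih
    · have edge : QEdge E s (Quotient.mk s b) (Quotient.mk s c) :=
        ⟨he, b, c, rfl, rfl, hbc⟩
      rcases ih with h1 | h1
      · exact Or.inr (h1 ▸ Relation.TransGen.single edge)
      · exact Or.inr (h1.tail edge)

/-- if two distinct vertices of `G/R` are independent in `G/R`, then any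
representatives of them are independent in `G`. -/
theorem stmt_4 {V : Type*} (E : V → V → Prop) (s : Setoid V)
    (a b : Quotient s) (hne : a ≠ b) (hindep : Indep (QEdge E s) a b)
    (u v : V) (hu : Quotient.mk s u = a) (hv : Quotient.mk s v = b) :
    Indep E u v := by
  subst hu hv
  constructor
  · intro h
    rcases reach_quot E s h with h1 | h1
    · exact hne h1
    · exact hindep.1 h1
  · intro h
    rcases reach_quot E s h with h1 | h1
    · exact hne h1.symm
    · exact hindep.2 h1
end

section
/- Let G = (V, E) be a finite directed acyclic graph. Then every equivalence class of the orbit equivalence relation induced by the automorphism group Aut(G) on V is an independent subset of V. -/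
/-- A permutation of the vertices is an automorphism of `G` if it preserves the
edge relation in both directions. -/
def IsAut {V : Type*} (E : V → V → Prop) (π : Equiv.Perm V) : Prop :=
  ∀ u v : V, E u v ↔ E (π u) (π v)

/-- The orbit equivalence relation induced by `Aut(G)`: `u` and `v` are related
exactly when some automorphism maps `u` to `v`. -/
def OrbRel {V : Type*} (E : V → V → Prop) (u v : V) : Prop :=
  ∃ π : Equiv.Perm V, IsAut E π ∧ π u = v

/-!
An automorphism `τ` of a DAG never sends a vertex `x` to a vertex reachable from `x`: otherwise,
applying powers of `τ` to `x ⇝ τ x` gives `x ⇝ τ x ⇝ τ² x ⇝ ⋯ ⇝ τⁿ x`, and on a finite vertex set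
`τⁿ = 1` for `n = orderOf τ`, a cycle through `x`. Two vertices `π v` and `σ v` of one orbit are
related by the automorphism `σ π⁻¹`, so neither reaches the other.
-/

section Automorphisms

variable {V : Type*} {E : V → V → Prop}

def autSubgroup (E : V → V → Prop) : Subgroup (Equiv.Perm V) where
  carrier := {π | IsAut E π}
  one_mem' _ _ := Iff.rfl
  mul_mem' hπ hσ a b := (hσ a b).trans (hπ _ _)
  inv_mem' {π} hπ a b := by
    simpa only [Equiv.Perm.coe_inv, Equiv.apply_symm_apply] using (hπ (π⁻¹ a) (π⁻¹ b)).symm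

theorem mem_autSubgroup {π : Equiv.Perm V} : π ∈ autSubgroup E ↔ IsAut E π := Iff.rfl

theorem IsAut.reach {π : Equiv.Perm V} (hπ : IsAut E π) {a b : V} (h : Reach E a b) :
    Reach E (π a) (π b) :=
  Relation.TransGen.lift π (fun _ _ hab => (hπ _ _).mp hab) _ _ h

theorem IsAut.reach_pow_succ_apply {τ : Equiv.Perm V} (hτ : IsAut E τ) {x : V}
    (hx : Reach E x (τ x)) (n : ℕ) : Reach E x ((τ ^ (n + 1)) x) := by
  induction n with
  | zero => simpa using hx
  | succ n ih =>
    have hstep : Reach E ((τ ^ (n + 1)) x) ((τ ^ (n + 1)) (τ x)) :=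
      IsAut.reach (mem_autSubgroup.mp (Subgroup.pow_mem _ hτ _)) hx
    rw [← Equiv.Perm.mul_apply, ← pow_succ] at hstep
    exact ih.trans hstep

theorem IsAut.not_reach_apply [Finite V] (hdag : ∀ v : V, ¬ Reach E v v)
    {τ : Equiv.Perm V} (hτ : IsAut E τ) (x : V) : ¬ Reach E x (τ x) := fun hx => by
  have hcycle := hτ.reach_pow_succ_apply hx (orderOf τ - 1)
  rw [Nat.sub_add_cancel (orderOf_pos τ), pow_orderOf_eq_one] at hcycle
  exact hdag x hcycle

theorem not_reach_of_orbRel [Finite V] (hdag : ∀ v : V, ¬ Reach E v v) {v u w : V}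
    (hu : OrbRel E v u) (hw : OrbRel E v w) : ¬ Reach E u w := by
  obtain ⟨π, hπ, rfl⟩ := hu
  obtain ⟨σ, hσ, rfl⟩ := hw
  have hτ : IsAut E (σ * π⁻¹) := mul_mem (s := autSubgroup E) hσ (inv_mem hπ)
  simpa using hτ.not_reach_apply hdag (π v)

end Automorphisms

/-- in a finite DAG, every orbit of the automorphism group is an
independent set of vertices. -/
theorem stmt_7 {V : Type*} [Finite V] (E : V → V → Prop)
    (hdag : ∀ v : V, ¬ Reach E v v) (v : V) :
    IndepSet E {u | OrbRel E v u} :=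
  fun _ hu _ hw _ => ⟨not_reach_of_orbRel hdag hu hw, not_reach_of_orbRel hdag hw hu⟩
end

section
/- Let G = (V, E) be a finite directed acyclic graph and let R be the orbit equivalence relation induced by the automorphism group Aut(G) on V. Then the quotient graph G/R is a directed acyclic graph (i.e. the orbit relation of Aut(G) is DAG-preserving). -/
/-- The orbit equivalence relation induced by `Aut(G)` on the vertices. -/
def orbSetoid {V : Type*} (E : V → V → Prop) : Setoid V where
  r u v := ∃ π : Equiv.Perm V, IsAut E π ∧ π u = v
  iseqv := by
    refine ⟨fun u => ⟨1, fun _ _ => Iff.rfl, rfl⟩, ?_, ?_⟩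
    · rintro u v ⟨π, hπ, rfl⟩
      exact ⟨π⁻¹, fun a b => Iff.symm (by simpa using hπ (π⁻¹ a) (π⁻¹ b)), by simp⟩
    · rintro u v w ⟨π, hπ, rfl⟩ ⟨σ, hσ, rfl⟩
      exact ⟨σ * π, fun a b => (hπ a b).trans (hσ (π a) (π b)), rfl⟩

/-- for a finite DAG, the quotient by the orbit equivalence relation of
`Aut(G)` is again a DAG (the orbit relation is DAG-preserving). -/
theorem stmt_8 {V : Type*} [Finite V] (E : V → V → Prop)
    (hdag : ∀ v : V, ¬ Reach E v v) :
    ∀ a : Quotient (orbSetoid E), ¬ Reach (QEdge E (orbSetoid E)) a a := by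

  classical
  -- Lift a single quotient edge to an edge from any representative.
  have lift : ∀ (b c : Quotient (orbSetoid E)) (u : V),
      Quotient.mk (orbSetoid E) u = b → QEdge E (orbSetoid E) b c →
      ∃ v : V, Quotient.mk (orbSetoid E) v = c ∧ E u v := by
    rintro b c u rfl he
    obtain ⟨hne, u', v, hu', rfl, huv⟩ : _ ≠ _ ∧ ∃ u' v : V,
        Quotient.mk (orbSetoid E) u' = Quotient.mk (orbSetoid E) u ∧
        Quotient.mk (orbSetoid E) v = c ∧ E u' v := he
    have hr : (orbSetoid E).r u' u := Quotient.exact hu'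
    obtain ⟨π, hπ, hπu⟩ := hr
    refine ⟨π v, ?_, ?_⟩
    · have hr2 : (orbSetoid E).r v (π v) := ⟨π, hπ, rfl⟩
      exact (Quotient.sound hr2).symm
    · rw [← hπu]; exact (hπ u' v).mp huv
  -- Lift reachability.
  have liftR : ∀ (b c : Quotient (orbSetoid E)),
      Reach (QEdge E (orbSetoid E)) b c → ∀ u : V,
      Quotient.mk (orbSetoid E) u = b →
      ∃ v : V, Quotient.mk (orbSetoid E) v = c ∧ Reach E u v := by
    intro b c h
    induction h with
    | single h =>
        intro u hu
        obtain ⟨v, hv, hE⟩ := lift _ _ u hu h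
        exact ⟨v, hv, Relation.TransGen.single hE⟩
    | tail _ h ih =>
        intro u hu
        obtain ⟨v, hv, hR⟩ := ih u hu
        obtain ⟨w, hw, hE⟩ := lift _ _ v hv h
        exact ⟨w, hw, hR.tail hE⟩
  intro a ha
  obtain ⟨u0, hu0⟩ := Quotient.exists_rep a
  -- step function within the class a
  have step : ∀ p : {u : V // Quotient.mk (orbSetoid E) u = a},
      ∃ v : V, Quotient.mk (orbSetoid E) v = a ∧ Reach E p.1 v :=
    fun p => liftR a a ha p.1 p.2
  choose f hf hfR using step
  let g : ℕ → {u : V // Quotient.mk (orbSetoid E) u = a} := fun n =>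
    Nat.rec ⟨u0, hu0⟩ (fun _ p => ⟨f p, hf p⟩) n
  have hg : ∀ n, Reach E (g n).1 (g (n+1)).1 := fun n => hfR (g n)
  have hmono : ∀ m k : ℕ, Reach E (g m).1 (g (m + k + 1)).1 := by
    intro m k
    induction k with
    | zero => exact hg m
    | succ k ih => exact ih.trans (hg (m + k + 1))
  have hlt : ∀ m n : ℕ, m < n → Reach E (g m).1 (g n).1 := by
    intro m n hmn
    obtain ⟨k, rfl⟩ := Nat.exists_eq_add_of_lt hmn
    exact hmono m k
  obtain ⟨m, n, hne, heq⟩ := Finite.exists_ne_map_eq_of_infinite g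
  rcases hne.lt_or_gt with h | h
  · exact hdag (g m).1 (heq ▸ hlt m n h)
  · exact hdag (g n).1 (heq ▸ hlt n m h)
end

section
/- Let G = (V, E) be a finite directed acyclic graph, let π be an automorphism of G, and let u ∈ V. Then there is no directed path from u to π(u), i.e. ¬(u ⇝ π(u)). -/
/-! Iterating the automorphism along the path `u ⇝ π u` gives `u ⇝ πⁿ u` for every `n ≥ 1`;
since `π` has finite order, taking `n = orderOf π` yields a cycle `u ⇝ u`. -/

section Automorphism

variable {V : Type*} {E : V → V → Prop} {π σ : Equiv.Perm V}

theorem IsAut.mul (hπ : IsAut E π) (hσ : IsAut E σ) : IsAut E (π * σ) :=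
  fun u v => (hσ u v).trans (hπ (σ u) (σ v))

theorem IsAut.pow (hπ : IsAut E π) : ∀ n : ℕ, IsAut E (π ^ n)
  | 0 => fun _ _ => Iff.rfl
  | n + 1 => by rw [pow_succ]; exact (hπ.pow n).mul hπ

theorem IsAut.reach_map (hπ : IsAut E π) {a b : V} (h : Reach E a b) : Reach E (π a) (π b) :=
  Relation.TransGen.lift π (fun x y => (hπ x y).mp) _ _ h

theorem IsAut.reach_pow_succ (hπ : IsAut E π) {u : V} (h : Reach E u (π u)) :
    ∀ n : ℕ, Reach E u ((π ^ (n + 1)) u)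
  | 0 => by simpa using h
  | n + 1 => by
    have step : Reach E ((π ^ (n + 1)) u) ((π ^ (n + 1)) (π u)) := (hπ.pow (n + 1)).reach_map h
    rw [← Equiv.Perm.mul_apply, ← pow_succ] at step
    exact (hπ.reach_pow_succ h n).trans step

end Automorphism

/-- in a finite DAG, no vertex reaches its image under an
automorphism. -/
theorem stmt_11 {V : Type*} [Finite V] (E : V → V → Prop)
    (hdag : ∀ v : V, ¬ Reach E v v)
    (π : Equiv.Perm V) (hπ : IsAut E π) (u : V) :
    ¬ Reach E u (π u) := by
  intro h
  obtain ⟨n, hn⟩ := Nat.exists_eq_add_one_of_ne_zero (orderOf_pos π).ne'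
  have hcycle := hπ.reach_pow_succ h n
  rw [← hn, pow_orderOf_eq_one, Equiv.Perm.one_apply] at hcycle
  exact hdag u hcycle
end

section
/- Let G = (V, E) be a finite directed acyclic graph and R an equivalence relation on V such that every equivalence class of R is an independent subset of V and the quotient graph G/R is a chain, i.e. its vertices can be listed as V̂₁, …, V̂ₙ with edge set exactly {(V̂₁, V̂₂), …, (V̂_{n−1}, V̂ₙ)}. Then for every directed path u₁ → u₂ → … → u_k in G, if m is the index with u₁ ∈ V̂_m, then u_j ∈ V̂_{j+m−1} for all j = 1, …, k; in particular k ≤ n. -/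
/-- if the classes of `R` are independent and `G/R` is a chain
`V̂₀ → ⋯ → V̂_{n-1}` (0-indexed), then every directed path `u₀ → ⋯ → u_{k-1}` of `G`
starting in class `V̂_m` satisfies `u_j ∈ V̂_{m+j}` for all `j < k`; in particular
`k ≤ n`. -/
theorem stmt_12 {V : Type*} [Finite V] (E : V → V → Prop) (s : Setoid V)
    (hdag : ∀ v : V, ¬ Reach E v v)
    (hclasses : ∀ q : Quotient s, IndepSet E {v | Quotient.mk s v = q})
    (n : ℕ) (c : Fin n ≃ Quotient s)
    (hchain : ∀ a b : Quotient s, QEdge E s a b ↔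
      ∃ i : ℕ, ∃ h : i + 1 < n, a = c ⟨i, Nat.lt_of_succ_lt h⟩ ∧ b = c ⟨i + 1, h⟩)
    (k : ℕ) (u : ℕ → V) (hpath : ∀ j : ℕ, j + 1 < k → E (u j) (u (j + 1)))
    (m : Fin n) (hm : c m = Quotient.mk s (u 0)) :
    (∀ j : ℕ, j < k → ∃ h : m.val + j < n, Quotient.mk s (u j) = c ⟨m.val + j, h⟩) ∧
      k ≤ n := by
  have key : ∀ j : ℕ, j < k → ∃ h : m.val + j < n, Quotient.mk s (u j) = c ⟨m.val + j, h⟩ := by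
    intro j hj
    induction j with
    | zero => exact ⟨by simpa using m.isLt, by simpa using hm.symm⟩
    | succ j ih =>
      obtain ⟨h, hq⟩ := ih (Nat.lt_of_succ_lt hj)
      have hE : E (u j) (u (j + 1)) := hpath j hj
      -- the two endpoints are in different classes
      have hne : Quotient.mk s (u j) ≠ Quotient.mk s (u (j + 1)) := by
        intro heq
        by_cases huv : u j = u (j + 1)
        · exact hdag (u j) (Relation.TransGen.single (huv ▸ hE))
        · have := (hclasses (Quotient.mk s (u j)) (u j) rfl (u (j + 1)) heq.symm huv).1
          exact this (Relation.TransGen.single hE)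
      have hQ : QEdge E s (Quotient.mk s (u j)) (Quotient.mk s (u (j + 1))) :=
        ⟨hne, u j, u (j + 1), rfl, rfl, hE⟩
      obtain ⟨i, hi, ha, hb⟩ := (hchain _ _).1 hQ
      have : (⟨i, Nat.lt_of_succ_lt hi⟩ : Fin n) = ⟨m.val + j, h⟩ :=
        c.injective (ha.symm.trans hq)
      have hieq : i = m.val + j := by simpa using congrArg Fin.val this
      subst hieq
      exact ⟨by omega, by rw [hb]; exact congrArg c (Fin.ext (by simp; omega))⟩
  refine ⟨key, ?_⟩
  rcases Nat.eq_zero_or_pos k with hk | hk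
  · omega
  · obtain ⟨h, _⟩ := key (k - 1) (by omega)
    omega
end
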